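/- Let I be a polymatroidal ideal of degree d = 2 in R = k[x_1,...,x_n]. If every associated prime of R/I is a minimal prime of I, i.e., Ass(R/I) = Min(R/I), then I is a matroidal ideal or I = m^2, where m = (x_1,...,x_n) is the maximal graded ideal. -/

import Mathlib

open MvPolynomial

namespace PaperDefs

variable {k : Type*} [Field k] {n : ℕ}

/-- The total degree of an exponent vector. -/
def edeg (a : Fin n →₀ ℕ) : ℕ := ∑ i, a i

/-- `I` is a monomial ideal: it is generated by a set of monomials. -/
def IsMonomialIdeal (I : Ideal (MvPolynomial (Fin n) k)) : Prop :=
  ∃ S : Set (Fin n →₀ ℕ),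
    I = Ideal.span ((fun a => (MvPolynomial.monomial a (1 : k))) '' S)

/-- The (exponent vectors of the) unique minimal monomial generating set `G(I)`:
monomials of `I` that are minimal with respect to divisibility. -/
def minGens (I : Ideal (MvPolynomial (Fin n) k)) : Set (Fin n →₀ ℕ) :=
  {a | (MvPolynomial.monomial a (1 : k)) ∈ I ∧
    ∀ b : Fin n →₀ ℕ, b < a → (MvPolynomial.monomial b (1 : k)) ∉ I}

/-- A squarefree exponent vector. -/
def SqFree (a : Fin n →₀ ℕ) : Prop := ∀ i, a i ≤ 1

/-- `I` is a polymatroidal ideal of degree `d`. -/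
def IsPolymatroidal (I : Ideal (MvPolynomial (Fin n) k)) (d : ℕ) : Prop :=
  IsMonomialIdeal I ∧ I ≠ ⊥ ∧
  (∀ a ∈ minGens I, edeg a = d) ∧
  ∀ a ∈ minGens I, ∀ b ∈ minGens I, ∀ i : Fin n, b i < a i →
    ∃ j : Fin n, a j < b j ∧
      (MvPolynomial.monomial (a - Finsupp.single i 1 + Finsupp.single j 1) (1 : k)) ∈ I

/-- `I` is a matroidal ideal of degree `d`: a squarefree polymatroidal ideal. -/
def IsMatroidal (I : Ideal (MvPolynomial (Fin n) k)) (d : ℕ) : Prop :=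
  IsPolymatroidal I d ∧ ∀ a ∈ minGens I, SqFree a

/-- `I` is full-supported: every variable divides some minimal generator. -/
def FullSupported (I : Ideal (MvPolynomial (Fin n) k)) : Prop :=
  ∀ i : Fin n, ∃ a ∈ minGens I, a i ≠ 0

/-- The maximal graded ideal `(x_1, ..., x_n)`. -/
noncomputable def varIdeal (k : Type*) [Field k] (n : ℕ) : Ideal (MvPolynomial (Fin n) k) :=
  Ideal.span (Set.range MvPolynomial.X)

/-- The colon ideal `(I : x_i)`. -/
noncomputable def colonVar (I : Ideal (MvPolynomial (Fin n) k)) (i : Fin n) :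
    Ideal (MvPolynomial (Fin n) k) :=
  I.colon ((Ideal.span {MvPolynomial.X i} : Ideal (MvPolynomial (Fin n) k)) : Set (MvPolynomial (Fin n) k))

/-- The height of an ideal: the infimum of `Order.height` over the primes containing it. -/
noncomputable def ht {R : Type*} [CommRing R] (I : Ideal R) : ℕ∞ :=
  ⨅ (p : PrimeSpectrum R) (_ : I ≤ p.asIdeal), Order.height p

/-- `I` is unmixed: all associated primes of `R/I` have the same height. -/
def IsUnmixed (I : Ideal (MvPolynomial (Fin n) k)) : Prop :=
  ∀ p ∈ associatedPrimes (MvPolynomial (Fin n) k) (MvPolynomial (Fin n) k ⧸ I),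
    ∀ q ∈ associatedPrimes (MvPolynomial (Fin n) k) (MvPolynomial (Fin n) k ⧸ I),
      ht p = ht q

/-- The arithmetical rank of `I`. -/
noncomputable def ara (I : Ideal (MvPolynomial (Fin n) k)) : ℕ :=
  sInf {t : ℕ | ∃ f : Fin t → MvPolynomial (Fin n) k,
    (Ideal.span (Set.range f)).radical = I.radical}

/-- The squarefree Veronese ideal of degree `d`. -/
noncomputable def sqfreeVeronese (k : Type*) [Field k] (n d : ℕ) : Ideal (MvPolynomial (Fin n) k) :=
  Ideal.span ((fun s : Finset (Fin n) => ∏ i ∈ s, MvPolynomial.X i) ''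
    {s : Finset (Fin n) | s.card = d})

/-- The depth of `R/I` : the supremum of lengths of `R/I`-regular sequences consisting of
elements of the maximal graded ideal. -/
noncomputable def quotDepth (I : Ideal (MvPolynomial (Fin n) k)) : ℕ :=
  sSup {r : ℕ | ∃ rs : List (MvPolynomial (Fin n) k), rs.length = r ∧
    (∀ x ∈ rs, x ∈ varIdeal k n) ∧
    RingTheory.Sequence.IsRegular (MvPolynomial (Fin n) k ⧸ I) rs}

/-- `R/I` is Cohen–Macaulay: the depth of `R/I` equals its Krull dimension. -/
def IsCohenMacaulayQuot (I : Ideal (MvPolynomial (Fin n) k)) : Prop :=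
  (quotDepth I : WithBot ℕ∞) = ringKrullDim (MvPolynomial (Fin n) k ⧸ I)

end PaperDefs

/-!
If `I` is not matroidal, some minimal generator is `x_i²`. Exchanging any other generator
`x_j x_l` (`l ≠ i`) against `x_i²` can only bring in `x_i`, so by full support `x_i x_j ∈ I` for
every `j`: the class of `x_i` in `R/I` is killed by `𝔪`, and `𝔪` is associated, hence minimal
over `I`. If no power of `x_j` lay in `I`, then `I` would lie in the prime `(x_t : t ≠ j) ⊊ 𝔪`;
so every `x_j²` is a minimal generator, exchanging `x_j²` against `x_l²` gives `x_j x_l ∈ I`,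
and `𝔪² ⊆ I ⊆ 𝔪²`.
-/

namespace Finsupp

variable {σ : Type*}

theorem eq_of_le_of_degree_le {a b : σ →₀ ℕ} (h : a ≤ b) (hd : b.degree ≤ a.degree) :
    a = b := by
  obtain ⟨c, rfl⟩ := le_iff_exists_add.mp h
  have hc : c.degree = 0 := by simp only [map_add] at hd; omega
  rw [(degree_eq_zero_iff c).mp hc, add_zero]

theorem eq_single_of_degree_le_apply {a : σ →₀ ℕ} {i : σ} (h : a.degree ≤ a i) :
    a = single i (a i) :=
  (eq_of_le_of_degree_le (single_le_iff.mpr le_rfl) (by rwa [degree_single])).symm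

theorem exists_eq_single_add_single_of_degree_eq_two {a : σ →₀ ℕ} {j : σ}
    (ha : a.degree = 2) (hj : a j ≠ 0) : ∃ l, a = single j 1 + single l 1 := by
  have hle : single j 1 ≤ a := single_le_iff.mpr (Nat.one_le_iff_ne_zero.mpr hj)
  have hrest : (a - single j 1).degree = 1 := by
    have := congrArg degree (add_tsub_cancel_of_le hle)
    rw [map_add, degree_single] at this
    omega
  obtain ⟨l, hl⟩ : a - single j 1 ∈ Set.range (fun l : σ ↦ single l 1) := by
    rw [range_single_one]; exact hrest
  exact ⟨l, by rw [show single l 1 = a - single j 1 from hl, add_tsub_cancel_of_le hle]⟩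

end Finsupp

theorem Ideal.IsMaximal.mem_associatedPrimes_quotient {R : Type*} [CommRing R] {P I : Ideal R}
    (hP : P.IsMaximal) {f : R} (hf : f ∉ I) (hPf : P ≤ I.colon {f}) :
    P ∈ associatedPrimes R (R ⧸ I) := by
  refine ⟨hP.isPrime, Ideal.Quotient.mk I f, ?_⟩
  have hcolon : ∀ r, r ∈ (⊥ : Submodule R (R ⧸ I)).colon {Ideal.Quotient.mk I f} ↔
      r ∈ I.colon {f} := fun r ↦ by
    rw [Submodule.mem_colon_singleton, Submodule.mem_colon_singleton, Submodule.mem_bot,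
      Algebra.smul_def, Ideal.Quotient.algebraMap_eq, ← map_mul, Ideal.Quotient.eq_zero_iff_mem,
      smul_eq_mul]
  have hproper : (⊥ : Submodule R (R ⧸ I)).colon {Ideal.Quotient.mk I f} ≠ ⊤ := fun htop ↦
    hf (by simpa using (hcolon 1).mp (htop ▸ Submodule.mem_top))
  rw [← hP.eq_of_le hproper fun r hr ↦ (hcolon r).mpr (hPf hr), hP.isPrime.radical]

namespace PaperDefs

open MvPolynomial Finsupp

variable {k : Type*} [Field k] {n : ℕ}

theorem edeg_eq_degree (a : Fin n →₀ ℕ) : edeg a = a.degree :=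
  (degree_eq_sum a).symm

theorem varIdeal_eq_idealOfVars : varIdeal k n = idealOfVars (Fin n) k := rfl

theorem varIdeal_eq_ker_constantCoeff :
    varIdeal k n = RingHom.ker (constantCoeff : MvPolynomial (Fin n) k →+* k) := by
  ext p
  rw [RingHom.mem_ker, ← pow_one (varIdeal k n), varIdeal_eq_idealOfVars,
    mem_pow_idealOfVars_iff', constantCoeff_eq]
  refine ⟨fun h ↦ h 0 (by simp), fun h x hx ↦ ?_⟩
  rwa [(degree_eq_zero_iff x).mp (Nat.lt_one_iff.mp hx)]

theorem varIdeal_isMaximal : (varIdeal k n).IsMaximal := by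
  rw [varIdeal_eq_ker_constantCoeff]
  exact RingHom.ker_isMaximal_of_surjective _ fun c ↦ ⟨C c, constantCoeff_C _ _⟩

theorem X_mul_X_eq_monomial (i j : Fin n) :
    (X i * X j : MvPolynomial (Fin n) k) = monomial (single i 1 + single j 1) 1 := by
  rw [X, X, monomial_mul, one_mul]

theorem varIdeal_sq_le_of_X_mul_X_mem {I : Ideal (MvPolynomial (Fin n) k)}
    (h : ∀ i j, X i * X j ∈ I) : varIdeal k n ^ 2 ≤ I := by
  rw [sq, varIdeal, Ideal.span_mul_span', Ideal.span_le]
  rintro _ ⟨_, ⟨i, rfl⟩, _, ⟨j, rfl⟩, rfl⟩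
  exact h i j

theorem exists_mem_minGens_le (I : Ideal (MvPolynomial (Fin n) k)) {a : Fin n →₀ ℕ}
    (ha : monomial a (1 : k) ∈ I) : ∃ c ∈ minGens I, c ≤ a := by
  induction a using WellFoundedLT.induction with
  | ind a ih =>
    by_cases h : ∃ b < a, monomial b (1 : k) ∈ I
    · obtain ⟨b, hba, hb⟩ := h
      obtain ⟨c, hc, hcb⟩ := ih b hba hb
      exact ⟨c, hc, hcb.trans hba.le⟩
    · push Not at h
      exact ⟨a, ⟨ha, h⟩, le_rfl⟩

theorem exists_monomial_single_mem_of_varIdeal_mem_minimalPrimes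
    {I : Ideal (MvPolynomial (Fin n) k)} (hI : IsMonomialIdeal I)
    (hmin : varIdeal k n ∈ I.minimalPrimes) (j : Fin n) :
    ∃ e, monomial (single j e) (1 : k) ∈ I := by
  by_contra! h
  obtain ⟨S, hS⟩ := hI
  -- `φ` sends `x_j` to `x` and every other variable to `0`: its kernel is `(x_t : t ≠ j)`.
  let φ := killCompl (R := k) (Function.injective_of_subsingleton fun _ : Unit ↦ j)
  have hIφ : I ≤ RingHom.ker φ := by
    rw [hS, Ideal.span_le]
    rintro _ ⟨s, hs, rfl⟩
    refine killCompl_monomial_eq_zero_of_not_subset _ _ fun hsub ↦ h (s j) ?_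
    rw [Set.range_const, Finset.coe_subset_singleton, support_subset_singleton] at hsub
    exact hsub ▸ hS ▸ Ideal.subset_span ⟨s, hs, rfl⟩
  have hφ : ∀ p, constantCoeff (φ p) = constantCoeff p := by
    suffices (constantCoeff : MvPolynomial Unit k →+* k).comp φ.toRingHom = constantCoeff from
      RingHom.congr_fun this
    apply ringHom_ext
    · simp [φ]
    · intro t
      by_cases ht : t = j <;> simp [φ, killCompl, ht]
  have hφm : RingHom.ker φ ≤ varIdeal k n := fun p hp ↦ by
    rw [varIdeal_eq_ker_constantCoeff, RingHom.mem_ker, ← hφ, RingHom.mem_ker.mp hp, map_zero]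
  have hXj : X j ∈ RingHom.ker φ := hmin.2 ⟨RingHom.ker_isPrime _, hIφ⟩ hφm
    (Ideal.subset_span ⟨j, rfl⟩)
  simp [φ, killCompl] at hXj

namespace IsPolymatroidal

variable {I : Ideal (MvPolynomial (Fin n) k)} {d : ℕ}

theorem degree_eq_of_mem_minGens (hI : IsPolymatroidal I d) {a : Fin n →₀ ℕ}
    (ha : a ∈ minGens I) : a.degree = d := by
  rw [← edeg_eq_degree, hI.2.2.1 a ha]

theorem le_degree_of_monomial_mem (hI : IsPolymatroidal I d) {a : Fin n →₀ ℕ}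
    (ha : monomial a (1 : k) ∈ I) : d ≤ a.degree := by
  obtain ⟨c, hc, hca⟩ := exists_mem_minGens_le I ha
  exact hI.degree_eq_of_mem_minGens hc ▸ degree_mono hca

theorem le_varIdeal_pow (hI : IsPolymatroidal I d) : I ≤ varIdeal k n ^ d := by
  obtain ⟨S, hS⟩ := hI.1
  have hSI : ∀ s ∈ S, monomial s (1 : k) ∈ I := fun s hs ↦ hS ▸ Ideal.subset_span ⟨s, hs, rfl⟩
  rw [hS, Ideal.span_le]
  rintro _ ⟨s, hs, rfl⟩
  exact (monomial_mem_pow_idealOfVars_iff d s one_ne_zero).mpr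
    (hI.le_degree_of_monomial_mem (hSI s hs))

theorem sub_single_add_single_mem (hI : IsPolymatroidal I d) {i l : Fin n} {e : ℕ}
    {b : Fin n →₀ ℕ} (hi : single i e ∈ minGens I) (hb : b ∈ minGens I) (hli : l ≠ i)
    (hbl : b l ≠ 0) : monomial (b - single l 1 + single i 1) (1 : k) ∈ I := by
  obtain ⟨j, hj, hmem⟩ := hI.2.2.2 b hb _ hi l (by rw [single_eq_of_ne hli]; omega)
  have hij : single i e j ≠ 0 := by omega
  obtain rfl : j = i := (single_apply_ne_zero.mp hij).1
  exact hmem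

theorem X_notMem (hI : IsPolymatroidal I d) (hd : 1 < d) (i : Fin n) :
    (X i : MvPolynomial (Fin n) k) ∉ I := fun h ↦ by
  have := hI.le_degree_of_monomial_mem h
  rw [degree_single] at this
  omega

theorem exists_single_two_mem_minGens (hI : IsPolymatroidal I 2) {a : Fin n →₀ ℕ}
    (ha : a ∈ minGens I) (hsf : ¬ SqFree a) : ∃ i, single i 2 ∈ minGens I := by
  obtain ⟨i, hi⟩ : ∃ i, 1 < a i := by simpa [SqFree] using hsf
  have hdeg := hI.degree_eq_of_mem_minGens ha
  have hai : a i = 2 := le_antisymm (hdeg ▸ le_degree i a) hi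
  have ha_eq : a = single i (a i) := eq_single_of_degree_le_apply (by omega)
  exact ⟨i, hai ▸ ha_eq ▸ ha⟩

theorem X_mul_X_mem_of_single_two_mem_minGens (hI : IsPolymatroidal I d) {i j : Fin n}
    (hi : single i 2 ∈ minGens I) (hj : single j 2 ∈ minGens I) :
    (X i * X j : MvPolynomial (Fin n) k) ∈ I := by
  rw [X_mul_X_eq_monomial]
  rcases eq_or_ne j i with rfl | hji
  · rw [← single_add]
    exact hi.1
  · have := hI.sub_single_add_single_mem hi hj hji (by simp)
    rwa [← single_tsub, add_comm] at this

theorem X_mul_X_mem_of_fullSupported (hI : IsPolymatroidal I 2) (hfull : FullSupported I)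
    {i : Fin n} (hi : single i 2 ∈ minGens I) (j : Fin n) :
    (X i * X j : MvPolynomial (Fin n) k) ∈ I := by
  obtain ⟨b, hb, hbj⟩ := hfull j
  obtain ⟨l, rfl⟩ := exists_eq_single_add_single_of_degree_eq_two
    (hI.degree_eq_of_mem_minGens hb) hbj
  rw [X_mul_X_eq_monomial, add_comm]
  rcases eq_or_ne l i with rfl | hli
  · exact hb.1
  · have := hI.sub_single_add_single_mem hi hb hli (by simp)
    rwa [add_tsub_cancel_right] at this

theorem single_two_mem_minGens_of_varIdeal_mem_minimalPrimes (hI : IsPolymatroidal I 2)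
    (hmin : varIdeal k n ∈ I.minimalPrimes) (j : Fin n) : single j 2 ∈ minGens I := by
  obtain ⟨e, he⟩ := exists_monomial_single_mem_of_varIdeal_mem_minimalPrimes hI.1 hmin j
  obtain ⟨c, hc, hce⟩ := exists_mem_minGens_le I he
  have hc_eq : c = single j (c j) :=
    support_subset_singleton.mp ((support_mono hce).trans support_single_subset)
  have hcj : c j = 2 := by
    rw [← hI.degree_eq_of_mem_minGens hc, hc_eq, degree_single, single_eq_same]
  exact hcj ▸ hc_eq ▸ hc

end IsPolymatroidal

end PaperDefs

open PaperDefs in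
/-- Proposition 1.7. Let `I` be a (full-supported, as assumed throughout
the paper) polymatroidal ideal of degree `2`. If `Ass(R/I) = Min(R/I)`, then `I` is a
matroidal ideal or `I = 𝔪²`, where `𝔪 = (x_1, ..., x_n)`. -/
theorem statement9 {k : Type*} [Field k] {n : ℕ}
    (I : Ideal (MvPolynomial (Fin n) k))
    (hI : IsPolymatroidal I 2) (hfull : FullSupported I)
    (hass : associatedPrimes (MvPolynomial (Fin n) k) (MvPolynomial (Fin n) k ⧸ I) =
      I.minimalPrimes) :
    IsMatroidal I 2 ∨ I = (varIdeal k n) ^ 2 := by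
  by_cases hsf : ∀ a ∈ minGens I, SqFree a
  · exact Or.inl ⟨hI, hsf⟩
  push Not at hsf
  obtain ⟨a, ha, ha_sf⟩ := hsf
  obtain ⟨i, hi⟩ := hI.exists_single_two_mem_minGens ha ha_sf
  have hsocle : varIdeal k n ≤ I.colon {(X i : MvPolynomial (Fin n) k)} := by
    refine Ideal.span_le.mpr (Set.range_subset_iff.mpr fun j ↦ ?_)
    rw [SetLike.mem_coe, Submodule.mem_colon_singleton, smul_eq_mul, mul_comm]
    exact hI.X_mul_X_mem_of_fullSupported hfull hi j
  have hmin : varIdeal k n ∈ I.minimalPrimes := hass ▸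
    varIdeal_isMaximal.mem_associatedPrimes_quotient (hI.X_notMem one_lt_two i) hsocle
  have hsq := hI.single_two_mem_minGens_of_varIdeal_mem_minimalPrimes hmin
  refine Or.inr (le_antisymm hI.le_varIdeal_pow (varIdeal_sq_le_of_X_mul_X_mem fun j l ↦ ?_))
  exact hI.X_mul_X_mem_of_single_two_mem_minGens (hsq j) (hsq l)
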